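/- arXiv:1412.0166 — 2 statements merged into one kernel-verified Lean document; each statement's English description precedes it below -/
import Mathlib

section
/- Suppose a cohomology class A of weight w > 0 with respect to D_H has a representative a = Σ_{i≥k} a^i with a^i of degree i, k maximal; then a^k is D-closed, and setting b = (1/w)G₀(a^k), the element a - D_H(b) also represents A and has no component in degree k; by maximality of k, a - D_H(b) = 0, so A = 0. Conclude: H^•(V, D_H) vanishes in positive weight whenever G₀ preserves V, [D, G₀] = L₀, degrees are bounded below on each weight space, and D_H = D + (degree +3 part). -/
/-- Vanishing of twisted cohomology in positive weight.  `M` models a single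
weight-`w` component (`w > 0`) of the bigraded space, with internal degree decomposition
`V : ℤ → Submodule ℚ M` bounded above and below; `D` has degree `+1`, the multiplication
by `H` (`Hm`) has degree `+3`, `G₀` has degree `-1`, `D² = 0`, `D_H = D + Hm` with
`D_H² = 0`, and `[D, G₀] = L₀` acts as `w • id` on this weight component.  Then every
`D_H`-closed element is `D_H`-exact: `H^•(V, D_H)` vanishes in positive weight. -/
theorem twisted_cohomology_vanishes_positive_weight
    {M : Type*} [AddCommGroup M] [Module ℚ M]
    (V : ℤ → Submodule ℚ M) (hV : DirectSum.IsInternal V)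
    (Nlo Nhi : ℤ)
    (hlo : ∀ d : ℤ, d < Nlo → V d = ⊥)
    (hhi : ∀ d : ℤ, Nhi < d → V d = ⊥)
    (D G₀ Hm : M →ₗ[ℚ] M)
    (hDdeg : ∀ d : ℤ, (V d).map D ≤ V (d + 1))
    (hHdeg : ∀ d : ℤ, (V d).map Hm ≤ V (d + 3))
    (hGdeg : ∀ d : ℤ, (V d).map G₀ ≤ V (d - 1))
    (hD2 : ∀ x, D (D x) = 0)
    (hDH2 : ∀ x, (D + Hm) ((D + Hm) x) = 0)
    (w : ℚ) (hw : 0 < w)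
    (hhomotopy : ∀ x : M, D (G₀ x) + G₀ (D x) = w • x) :
    ∀ x : M, (D + Hm) x = 0 → ∃ y : M, (D + Hm) y = x := by
  intro x hx
  have hwne : w ≠ 0 := ne_of_gt hw
  set G : M →ₗ[ℚ] M := w⁻¹ • G₀ with hGdef
  have hhom : ∀ y, D (G y) + G (D y) = y := by
    intro y
    simp only [hGdef, LinearMap.smul_apply, map_smul]
    rw [← smul_add, hhomotopy y, smul_smul, inv_mul_cancel₀ hwne, one_smul]
  have hGdeg' : ∀ d : ℤ, ∀ y ∈ V d, G y ∈ V (d - 1) := fun d y hy => by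
    simpa [hGdef] using
      Submodule.smul_mem _ w⁻¹ (hGdeg d (Submodule.mem_map_of_mem hy))
  set N : M →ₗ[ℚ] M := -(Hm ∘ₗ G + G ∘ₗ Hm) with hNdef
  have hNapp : ∀ y, N y = -(Hm (G y) + G (Hm y)) := fun y => by simp [hNdef]
  -- N has degree +2
  have hNdeg : ∀ d : ℤ, ∀ y ∈ V d, N y ∈ V (d + 2) := by
    intro d y hy
    rw [hNapp]
    apply Submodule.neg_mem
    apply Submodule.add_mem
    · have h1 : G y ∈ V (d - 1) := hGdeg' d y hy
      have h2 : Hm (G y) ∈ V (d - 1 + 3) := hHdeg _ (Submodule.mem_map_of_mem h1)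
      have he : d - 1 + 3 = d + 2 := by ring
      rwa [he] at h2
    · have h1 : Hm y ∈ V (d + 3) := hHdeg _ (Submodule.mem_map_of_mem hy)
      have h2 : G (Hm y) ∈ V (d + 3 - 1) := hGdeg' _ _ h1
      have he : d + 3 - 1 = d + 2 := by ring
      rwa [he] at h2
  -- powers of N raise degree by 2 each
  have hNpow : ∀ (m : ℕ) (d : ℤ), ∀ y ∈ V d, (N ^ m) y ∈ V (d + 2 * m) := by
    intro m
    induction m with
    | zero => intro d y hy; simpa using hy
    | succ k ih =>
      intro d y hy
      have h1 := hNdeg d y hy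
      have h2 := ih (d + 2) _ h1
      have he : d + 2 + 2 * (k : ℤ) = d + 2 * ((k : ℤ) + 1) := by ring
      rw [he] at h2
      have hp : (N ^ (k + 1)) y = (N ^ k) (N y) := by
        rw [pow_succ, Module.End.mul_apply]
      rw [hp]
      have he2 : d + 2 * ((k : ℤ) + 1) = d + 2 * ((k + 1 : ℕ) : ℤ) := by
        push_cast; ring
      rw [he2] at h2
      exact h2
  -- N is nilpotent
  obtain ⟨m, hm⟩ : ∃ m : ℕ, ∀ y : M, (N ^ m) y = 0 := by
    refine ⟨(Nhi - Nlo).toNat + 1, fun y => ?_⟩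
    have hker : ∀ d : ℤ, V d ≤ LinearMap.ker (N ^ ((Nhi - Nlo).toNat + 1)) := by
      intro d z hz
      rw [LinearMap.mem_ker]
      by_cases hd : d < Nlo
      · have hz0 : z = 0 := by simpa [hlo d hd] using hz
        simp [hz0]
      · have h1 := hNpow ((Nhi - Nlo).toNat + 1) d z hz
        have hz2 : V (d + 2 * (((Nhi - Nlo).toNat + 1 : ℕ) : ℤ)) = ⊥ := by
          apply hhi
          push_cast
          omega
        rw [hz2] at h1
        simpa using h1
    have htop : (⊤ : Submodule ℚ M) ≤ LinearMap.ker (N ^ ((Nhi - Nlo).toNat + 1)) := by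
      rw [← hV.submodule_iSup_eq_top]
      exact iSup_le hker
    exact LinearMap.mem_ker.mp (htop Submodule.mem_top)
  -- key identity
  have key : ∀ z, N z = z - ((D + Hm) (G z) + G ((D + Hm) z)) := by
    intro z
    rw [hNapp]
    simp only [LinearMap.add_apply, map_add]
    rw [eq_sub_iff_add_eq]
    conv_rhs => rw [← hhom z]
    abel
  -- N commutes with D + Hm
  have hcomm : ∀ y, (D + Hm) (N y) = N ((D + Hm) y) := by
    intro y
    rw [key y, key ((D + Hm) y)]
    simp only [map_sub, map_add, hDH2, map_zero]
    abel
  -- N^i x is closed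
  have hclosed : ∀ i : ℕ, (D + Hm) ((N ^ i) x) = 0 := by
    intro i
    induction i with
    | zero => simpa using hx
    | succ k ih =>
      have hp : (N ^ (k + 1)) x = N ((N ^ k) x) := by
        rw [pow_succ', Module.End.mul_apply]
      rw [hp, hcomm, ih, map_zero]
  -- main induction
  have main : ∀ i : ℕ, ∃ y : M, (D + Hm) y + (N ^ i) x = x := by
    intro i
    induction i with
    | zero => exact ⟨0, by simp⟩
    | succ k ih =>
      obtain ⟨y, hy⟩ := ih
      refine ⟨y + G ((N ^ k) x), ?_⟩
      have h1 : (N ^ (k + 1)) x = (N ^ k) x - (D + Hm) (G ((N ^ k) x)) := by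
        rw [pow_succ', Module.End.mul_apply, key, hclosed k, map_zero, add_zero]
      rw [map_add, h1]
      conv_rhs => rw [← hy]
      abel
  obtain ⟨y, hy⟩ := main m
  exact ⟨y, by rw [← hy, hm x, add_zero]⟩
end

section
/- With T(G₀ + A∧G₁) = -G₁ + Â∧G₀, the map T : Ω^•(Z)^{S¹} → Ω^{•+1}(Ẑ)^{S¹} is a linear isomorphism shifting degree by one, and its square (applying T-duality twice, exchanging the roles of (Z,H) and (Ẑ,Ĥ)) is -id. -/
/-- With `T(G₀ + A∧G₁) = -G₁ + Â∧G₀`, the map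
`T : Ω^•(Z)^{S¹} → Ω^{•+1}(Ẑ)^{S¹}` is a linear isomorphism shifting the (mod 2) degree by
one, and applying T-duality twice (with the roles of `(Z,H)` and `(Ẑ,Ĥ)` exchanged, the
dual map being `T̂(Ĝ₀ + Â∧Ĝ₁) = -Ĝ₁ + A∧Ĝ₀`) gives `-id`.  Invariant forms are modeled as
pairs over the ℤ/2-graded ring of forms on `M` with graded pieces `V i`; a degree-`i`
invariant form is `(G₀, G₁)` with `G₀ ∈ V i`, `G₁ ∈ V (i+1)`. -/
theorem T_duality_degree_shift_and_square
    {Ω : Type*} [AddCommGroup Ω]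
    (V : ZMod 2 → Submodule ℤ Ω)
    (T Th : Ω × Ω → Ω × Ω)
    (hT : ∀ G : Ω × Ω, T G = (-G.2, G.1))
    (hTh : ∀ G : Ω × Ω, Th G = (-G.2, G.1)) :
    Function.Bijective T
    ∧ (∀ G G' : Ω × Ω, T (G + G') = T G + T G')
    ∧ (∀ (i : ZMod 2) (G : Ω × Ω), G.1 ∈ V i → G.2 ∈ V (i + 1) →
        (T G).1 ∈ V (i + 1) ∧ (T G).2 ∈ V (i + 1 + 1))
    ∧ (∀ G : Ω × Ω, Th (T G) = -G) := by
  refine ⟨⟨fun a b hab => ?_, fun G => ⟨(G.2, -G.1), by simp [hT]⟩⟩,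
    fun G G' => by simp [hT, Prod.ext_iff, neg_add]; abel,
    fun i G h1 h2 => ⟨by simp [hT]; exact h2, by
      simp [hT]
      have : i + 1 + 1 = i := by
        have : (2 : ZMod 2) = 0 := rfl
        rw [add_assoc, show (1:ZMod 2)+1 = 0 from rfl, add_zero]
      rw [this]; exact h1⟩,
    fun G => by simp [hT, hTh, Prod.ext_iff]⟩
  have := hT a ▸ hT b ▸ hab
  simp [hT, Prod.ext_iff] at hab
  exact Prod.ext hab.2 hab.1
end
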